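/- arXiv:1805.10218 — 2 statements merged into one kernel-verified Lean document; each statement's English description precedes it below -/
import Mathlib

section
/- (Configuration D.) Let ŵ ∈ S_N, regarded as a bijection {1,…,N} → {1,…,n₁}×{1,…,n₂}. Suppose there are k ∈ {1,…,N−2}, i ∈ {1,…,n₁−1}, j ∈ {1,…,n₂−1} such that {ŵ(k), ŵ(k+1)} = {(i,j+1), (i+1,j)} and ŵ(k+2) = (i+1,j+1). Let v ∈ W be determined by v⁻¹ = ((i i+1), (j j+1)) and let v̂ ∈ S_N be determined by v̂⁻¹ = ŵ·(k k+2 k+1)·ŵ₀, where (k k+2 k+1) is the 3-cycle sending k ↦ k+2 ↦ k+1 ↦ k. Then ŵ·Φ̂(((v̂ŵ)^∨)⁻¹) = {ε̂_{(i+1,j+1)} − ε̂_{(i,j+1)}, ε̂_{(i+1,j+1)} − ε̂_{(i+1,j)}}, Φ(v⁻¹) = {ε_{i+1} − ε_i, η_{j+1} − η_j}, and ρ restricts to a bijection from ŵ·Φ̂(((v̂ŵ)^∨)⁻¹) onto Φ(v⁻¹). -/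
open Equiv

/-- The weight lattice `L = ℤ^{n₁} × ℤ^{n₂}` of `GL(n₁) × GL(n₂)`. -/
abbrev L (n₁ n₂ : ℕ) : Type := (Fin n₁ → ℤ) × (Fin n₂ → ℤ)

/-- The weight lattice `L̂ = ℤ^N` of `GL(N)`. -/
abbrev Lhat (N : ℕ) : Type := Fin N → ℤ

/-- The standard basis vector `ε_a` of the first factor of `L`. -/
def eps {n₁ n₂ : ℕ} (a : Fin n₁) : L n₁ n₂ := (Pi.single a 1, 0)

/-- The standard basis vector `η_c` of the second factor of `L`. -/
def eta {n₁ n₂ : ℕ} (c : Fin n₂) : L n₁ n₂ := (0, Pi.single c 1)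

/-- The standard basis vector `ε̂_p` of `L̂`. -/
def epsHat {N : ℕ} (p : Fin N) : Lhat N := Pi.single p 1

/-- The lexicographic identification of `{1,…,n₁} × {1,…,n₂}` with `{1,…,n₁n₂}`,
`(i,j) ↦ (i-1)n₂ + j` in 1-based terms. -/
def lex {n₁ n₂ : ℕ} (i : Fin n₁) (j : Fin n₂) : Fin (n₁ * n₂) :=
  finProdFinEquiv (i, j)

/-- The action of `W = S_{n₁} × S_{n₂}` on `L`, characterised by
`u • ε_a = ε_{u₁ a}` and `u • η_c = η_{u₂ c}`. -/
def wAct {n₁ n₂ : ℕ} (u : Perm (Fin n₁) × Perm (Fin n₂)) (x : L n₁ n₂) : L n₁ n₂ :=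
  (x.1 ∘ u.1.symm, x.2 ∘ u.2.symm)

/-- The action of `Ŵ = S_N` on `L̂`, characterised by `û • ε̂_p = ε̂_{û p}`. -/
def hatAct {N : ℕ} (u : Perm (Fin N)) (x : Lhat N) : Lhat N := x ∘ u.symm

/-- The positive roots `Φ⁺` of `GL(n₁) × GL(n₂)`. -/
def PhiPos (n₁ n₂ : ℕ) : Set (L n₁ n₂) :=
  {x | ∃ a b : Fin n₁, a < b ∧ x = eps a - eps b} ∪
    {x | ∃ c d : Fin n₂, c < d ∧ x = eta c - eta d}

/-- The negative roots `Φ⁻ = -Φ⁺`. -/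
def PhiNeg (n₁ n₂ : ℕ) : Set (L n₁ n₂) := Neg.neg '' PhiPos n₁ n₂

/-- The inversion set `Φ(u) = Φ⁻ ∩ u · Φ⁺`. -/
def Phi {n₁ n₂ : ℕ} (u : Perm (Fin n₁) × Perm (Fin n₂)) : Set (L n₁ n₂) :=
  PhiNeg n₁ n₂ ∩ wAct u '' PhiPos n₁ n₂

/-- The positive roots `Φ̂⁺` of `GL(N)`. -/
def PhiHatPos (N : ℕ) : Set (Lhat N) :=
  {x | ∃ p q : Fin N, p < q ∧ x = epsHat p - epsHat q}

/-- The negative roots `Φ̂⁻ = -Φ̂⁺`. -/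
def PhiHatNeg (N : ℕ) : Set (Lhat N) := Neg.neg '' PhiHatPos N

/-- The inversion set `Φ̂(û) = Φ̂⁻ ∩ û · Φ̂⁺`. -/
def PhiHat {N : ℕ} (u : Perm (Fin N)) : Set (Lhat N) :=
  PhiHatNeg N ∩ hatAct u '' PhiHatPos N

/-- The longest element `ŵ₀ : k ↦ N + 1 - k` of `S_N`. -/
def w0 (N : ℕ) : Perm (Fin N) := Fin.revPerm

/-- The 3-cycle `(a b c)` sending `a ↦ b ↦ c ↦ a` (permutations composed right-to-left). -/
def cyc {α : Type*} [DecidableEq α] (a b c : α) : Perm α :=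
  Equiv.swap a b * Equiv.swap b c

lemma hatAct_epsHat {N : ℕ} (u : Perm (Fin N)) (p : Fin N) :
    hatAct u (epsHat p) = epsHat (u p) := by
  funext q
  simp [hatAct, epsHat, Pi.single_apply, Equiv.symm_apply_eq]

lemma hatAct_sub {N : ℕ} (u : Perm (Fin N)) (x y : Lhat N) :
    hatAct u (x - y) = hatAct u x - hatAct u y := rfl

lemma single_sub_inj {n : ℕ} {a b c d : Fin n} (hab : a ≠ b)
    (h : (Pi.single a 1 - Pi.single b 1 : Fin n → ℤ) = Pi.single c 1 - Pi.single d 1) :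
    a = c ∧ b = d := by
  have ha := congrFun h a
  have hb := congrFun h b
  simp only [Pi.sub_apply, Pi.single_apply, if_pos rfl, if_neg hab, if_neg hab.symm] at ha hb
  constructor
  · by_contra hac
    rw [if_neg hac] at ha
    split_ifs at ha <;> omega
  · by_contra hbd
    rw [if_neg hbd] at hb
    split_ifs at hb <;> omega

lemma cyc_apply {α : Type*} [DecidableEq α] (a b c x : α) (hab : a ≠ b) (hac : a ≠ c)
    (hbc : b ≠ c) :
    cyc a b c x = if x = a then b else if x = b then c else if x = c then a else x := by
  simp only [cyc, Perm.mul_apply, swap_apply_def]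
  split_ifs <;> simp_all

lemma phiHat_cyc {N : ℕ} (k k₁ k₂ : Fin N) (hk₁ : (k₁ : ℕ) = (k : ℕ) + 1)
    (hk₂ : (k₂ : ℕ) = (k : ℕ) + 2) :
    PhiHat (cyc k k₂ k₁) = {epsHat k₂ - epsHat k, epsHat k₂ - epsHat k₁} := by
  have hkk₂ : k ≠ k₂ := by simp [Fin.ext_iff]; omega
  have hkk₁ : k ≠ k₁ := by simp [Fin.ext_iff]; omega
  have hk₂k₁ : k₂ ≠ k₁ := by simp [Fin.ext_iff]; omega
  have hu : ∀ x, cyc k k₂ k₁ x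
      = if x = k then k₂ else if x = k₂ then k₁ else if x = k₁ then k else x := fun x =>
    cyc_apply k k₂ k₁ x hkk₂ hkk₁ hk₂k₁
  ext x
  constructor
  · rintro ⟨⟨y, ⟨p, q, hpq, rfl⟩, hyx⟩, z, ⟨r, s, hrs, rfl⟩, hzx⟩
    rw [hatAct_sub, hatAct_epsHat, hatAct_epsHat] at hzx
    have hx : epsHat q - epsHat p = x := by rw [← hyx]; abel
    have h2 : epsHat q - epsHat p
        = epsHat (cyc k k₂ k₁ r) - epsHat (cyc k k₂ k₁ s) := by rw [hzx, hx]
    obtain ⟨hq, hp⟩ := single_sub_inj (Fin.ne_of_gt hpq) h2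
    rw [hu r] at hq; rw [hu s] at hp
    have hcase : (q = k₂ ∧ p = k) ∨ (q = k₂ ∧ p = k₁) := by
      split_ifs at hq hp <;>
        simp only [Fin.ext_iff, Fin.lt_def, ne_eq] at * <;> omega
    rw [← hx]
    rcases hcase with ⟨rfl, rfl⟩ | ⟨rfl, rfl⟩
    · exact Set.mem_insert _ _
    · exact Set.mem_insert_of_mem _ rfl
  · have hlt1 : k < k₁ := by rw [Fin.lt_def]; omega
    have hlt2 : k < k₂ := by rw [Fin.lt_def]; omega
    have huk : cyc k k₂ k₁ k = k₂ := by rw [hu]; simp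
    have huk₁ : cyc k k₂ k₁ k₁ = k := by rw [hu]; simp [hkk₁.symm, hk₂k₁.symm]
    have huk₂ : cyc k k₂ k₁ k₂ = k₁ := by rw [hu]; simp [hkk₂.symm]
    rintro (rfl | rfl)
    · refine ⟨⟨epsHat k - epsHat k₂, ⟨k, k₂, hlt2, rfl⟩, by abel⟩,
        epsHat k - epsHat k₁, ⟨k, k₁, hlt1, rfl⟩, ?_⟩
      rw [hatAct_sub, hatAct_epsHat, hatAct_epsHat, huk, huk₁]
    · refine ⟨⟨epsHat k₁ - epsHat k₂, ⟨k₁, k₂, by rw [Fin.lt_def]; omega, rfl⟩, by abel⟩,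
        epsHat k - epsHat k₂, ⟨k, k₂, hlt2, rfl⟩, ?_⟩
      rw [hatAct_sub, hatAct_epsHat, hatAct_epsHat, huk, huk₂]

lemma wAct_eps {n₁ n₂ : ℕ} (u : Perm (Fin n₁) × Perm (Fin n₂)) (a : Fin n₁) :
    wAct u (eps a) = eps (u.1 a) := by
  refine Prod.ext ?_ rfl
  funext q
  simp [wAct, eps, Pi.single_apply, Equiv.symm_apply_eq]

lemma wAct_eta {n₁ n₂ : ℕ} (u : Perm (Fin n₁) × Perm (Fin n₂)) (c : Fin n₂) :
    wAct u (eta c) = eta (u.2 c) := by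
  refine Prod.ext rfl ?_
  funext q
  simp [wAct, eta, Pi.single_apply, Equiv.symm_apply_eq]

lemma wAct_sub {n₁ n₂ : ℕ} (u : Perm (Fin n₁) × Perm (Fin n₂)) (x y : L n₁ n₂) :
    wAct u (x - y) = wAct u x - wAct u y := rfl

lemma eps_sub_inj {n₁ n₂ : ℕ} {a b c d : Fin n₁} (hab : a ≠ b)
    (h : (eps a - eps b : L n₁ n₂) = eps c - eps d) : a = c ∧ b = d :=
  single_sub_inj hab (congrArg Prod.fst h)

lemma eta_sub_inj {n₁ n₂ : ℕ} {a b c d : Fin n₂} (hab : a ≠ b)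
    (h : (eta a - eta b : L n₁ n₂) = eta c - eta d) : a = c ∧ b = d :=
  single_sub_inj hab (congrArg Prod.snd h)

lemma eps_sub_ne_eta_sub {n₁ n₂ : ℕ} {a b : Fin n₁} {c d : Fin n₂} (hab : a ≠ b) :
    (eps a - eps b : L n₁ n₂) ≠ eta c - eta d := by
  intro h
  have := congrFun (congrArg Prod.fst h) a
  simp [eps, eta, Pi.single_apply, hab.symm] at this

lemma swap_adj_inv {n : ℕ} {i i' : Fin n} (hi' : (i' : ℕ) = (i : ℕ) + 1) {p q : Fin n}
    (hpq : p < q) (hinv : Equiv.swap i i' q < Equiv.swap i i' p) :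
    Equiv.swap i i' p = i' ∧ Equiv.swap i i' q = i := by
  have h1 := i'.isLt
  simp only [swap_apply_def] at *
  split_ifs at * <;> omega

lemma phi_adj {n₁ n₂ : ℕ} {i i' : Fin n₁} (hi' : (i' : ℕ) = (i : ℕ) + 1)
    {j j' : Fin n₂} (hj' : (j' : ℕ) = (j : ℕ) + 1) :
    Phi (Equiv.swap i i', Equiv.swap j j') = {(eps i' - eps i : L n₁ n₂), eta j' - eta j} := by
  have hii : i < i' := by rw [Fin.lt_def]; omega
  have hjj : j < j' := by rw [Fin.lt_def]; omega
  ext x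
  constructor
  · rintro ⟨⟨y, hy, hyx⟩, z, hz, hzx⟩
    rcases hy with ⟨a, b, hab, rfl⟩ | ⟨c, d, hcd, rfl⟩ <;>
      rcases hz with ⟨p, q, hpq, rfl⟩ | ⟨p, q, hpq, rfl⟩
    · rw [wAct_sub, wAct_eps, wAct_eps] at hzx
      have hx : (eps b - eps a : L n₁ n₂) = x := by rw [← hyx]; abel
      have h2 : (eps b - eps a : L n₁ n₂)
          = eps (Equiv.swap i i' p) - eps (Equiv.swap i i' q) := by rw [hzx, hx]
      obtain ⟨hb, ha⟩ := eps_sub_inj (Fin.ne_of_gt hab) h2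
      obtain ⟨hp, hq⟩ := swap_adj_inv hi' hpq (by rw [← ha, ← hb]; exact hab)
      rw [← hx, hb, ha, hp, hq]
      exact Set.mem_insert _ _
    · exfalso
      rw [wAct_sub, wAct_eta, wAct_eta] at hzx
      have hx : (eps b - eps a : L n₁ n₂) = x := by rw [← hyx]; abel
      exact eps_sub_ne_eta_sub (Fin.ne_of_gt hab) (hx.trans hzx.symm)
    · exfalso
      rw [wAct_sub, wAct_eps, wAct_eps] at hzx
      have hx : (eta d - eta c : L n₁ n₂) = x := by rw [← hyx]; abel
      exact eps_sub_ne_eta_sub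
        (Equiv.injective _ |>.ne (Fin.ne_of_lt hpq)) (hzx.trans hx.symm).symm.symm
    · rw [wAct_sub, wAct_eta, wAct_eta] at hzx
      have hx : (eta d - eta c : L n₁ n₂) = x := by rw [← hyx]; abel
      have h2 : (eta d - eta c : L n₁ n₂)
          = eta (Equiv.swap j j' p) - eta (Equiv.swap j j' q) := by rw [hzx, hx]
      obtain ⟨hb, ha⟩ := eta_sub_inj (Fin.ne_of_gt hcd) h2
      obtain ⟨hp, hq⟩ := swap_adj_inv hj' hpq (by rw [← ha, ← hb]; exact hcd)
      rw [← hx, hb, ha, hp, hq]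
      exact Set.mem_insert_of_mem _ rfl
  · rintro (rfl | rfl)
    · refine ⟨⟨eps i - eps i', Or.inl ⟨i, i', hii, rfl⟩, by abel⟩,
        eps i - eps i', Or.inl ⟨i, i', hii, rfl⟩, ?_⟩
      rw [wAct_sub, wAct_eps, wAct_eps]
      simp [swap_apply_left, swap_apply_right]
    · refine ⟨⟨eta j - eta j', Or.inr ⟨j, j', hjj, rfl⟩, by abel⟩,
        eta j - eta j', Or.inr ⟨j, j', hjj, rfl⟩, ?_⟩
      rw [wAct_sub, wAct_eta, wAct_eta]
      simp [swap_apply_left, swap_apply_right]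

/-- Configuration D: `{ŵ(k), ŵ(k+1)} = {(i,j+1), (i+1,j)}` and
`ŵ(k+2) = (i+1,j+1)`; with `v⁻¹ = ((i i+1), (j j+1))` and `v̂⁻¹ = ŵ (k k+2 k+1) ŵ₀`,
the sets are as indicated and `ρ` restricts to a bijection between them. -/
theorem config_D (n₁ n₂ : ℕ) (hn₁ : 0 < n₁) (hn₂ : 0 < n₂)
    (ρ : Lhat (n₁ * n₂) →ₗ[ℤ] L n₁ n₂)
    (hρ : ∀ (i : Fin n₁) (j : Fin n₂), ρ (epsHat (lex i j)) = eps i + eta j)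
    (wh : Perm (Fin (n₁ * n₂)))
    (k k₁ k₂ : Fin (n₁ * n₂)) (hk₁ : (k₁ : ℕ) = (k : ℕ) + 1) (hk₂ : (k₂ : ℕ) = (k : ℕ) + 2)
    (i i' : Fin n₁) (hi' : (i' : ℕ) = (i : ℕ) + 1)
    (j j' : Fin n₂) (hj' : (j' : ℕ) = (j : ℕ) + 1)
    (hwk₀₁ : ({wh k, wh k₁} : Set (Fin (n₁ * n₂))) = {lex i j', lex i' j})
    (hwk₂ : wh k₂ = lex i' j')
    (v : Perm (Fin n₁) × Perm (Fin n₂))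
    (hv : v⁻¹ = (Equiv.swap i i', Equiv.swap j j'))
    (vh : Perm (Fin (n₁ * n₂)))
    (hvh : vh⁻¹ = wh * cyc k k₂ k₁ * w0 (n₁ * n₂)) :
    hatAct wh '' PhiHat ((w0 (n₁ * n₂) * (vh * wh))⁻¹) =
      {epsHat (lex i' j') - epsHat (lex i j'), epsHat (lex i' j') - epsHat (lex i' j)} ∧
    Phi v⁻¹ = {(eps i' - eps i : L n₁ n₂), eta j' - eta j} ∧
    Set.BijOn (⇑ρ) (hatAct wh '' PhiHat ((w0 (n₁ * n₂) * (vh * wh))⁻¹)) (Phi v⁻¹) := by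
  have : True := trivial
  have key : (w0 (n₁ * n₂) * (vh * wh))⁻¹ = cyc k k₂ k₁ := by
    have hvh' : vh = (wh * cyc k k₂ k₁ * w0 (n₁ * n₂))⁻¹ := by rw [← hvh, inv_inv]
    rw [hvh']; group
  have hnei : i ≠ i' := by omega
  have hlexne : lex i' j' ≠ lex i j' := by
    intro h
    have := finProdFinEquiv.injective h
    simp only [Prod.mk.injEq] at this
    exact hnei this.1.symm
  have hlexne2 : lex i j' ≠ lex i' j := by
    intro h
    have := finProdFinEquiv.injective h
    simp only [Prod.mk.injEq] at this
    exact hnei this.1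
  have e1 : hatAct wh '' PhiHat ((w0 (n₁ * n₂) * (vh * wh))⁻¹) =
      {epsHat (lex i' j') - epsHat (lex i j'), epsHat (lex i' j') - epsHat (lex i' j)} := by
    rw [key, phiHat_cyc k k₁ k₂ hk₁ hk₂, Set.image_pair]
    simp only [hatAct_sub, hatAct_epsHat, hwk₂]
    rcases Set.pair_eq_pair_iff.mp hwk₀₁ with ⟨h1, h2⟩ | ⟨h1, h2⟩
    · rw [h1, h2]
    · rw [h1, h2, Set.pair_comm]
  have e2 : Phi v⁻¹ = {(eps i' - eps i : L n₁ n₂), eta j' - eta j} := by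
    rw [hv]; exact phi_adj hi' hj'
  refine ⟨e1, e2, ?_⟩
  rw [e1, e2]
  have hρ1 : ρ (epsHat (lex i' j') - epsHat (lex i j')) = (eps i' - eps i : L n₁ n₂) := by
    rw [map_sub, hρ, hρ]; abel
  have hρ2 : ρ (epsHat (lex i' j') - epsHat (lex i' j)) = (eta j' - eta j : L n₁ n₂) := by
    rw [map_sub, hρ, hρ]; abel
  have hx12 : epsHat (lex i' j') - epsHat (lex i j')
      ≠ epsHat (lex i' j') - epsHat (lex i' j) := by
    intro h
    exact hlexne2 (single_sub_inj hlexne h).2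
  have hy12 : (eps i' - eps i : L n₁ n₂) ≠ eta j' - eta j :=
    eps_sub_ne_eta_sub hnei.symm
  refine ⟨?_, ?_, ?_⟩
  · rintro x hx
    simp only [Set.mem_insert_iff, Set.mem_singleton_iff] at hx
    rcases hx with rfl | rfl
    · rw [hρ1]; exact Set.mem_insert _ _
    · rw [hρ2]; exact Set.mem_insert_of_mem _ rfl
  · intro a ha b hb hab
    simp only [Set.mem_insert_iff, Set.mem_singleton_iff] at ha hb
    rcases ha with rfl | rfl <;> rcases hb with rfl | rfl
    · rfl
    · rw [hρ1, hρ2] at hab; exact absurd hab hy12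
    · rw [hρ1, hρ2] at hab; exact absurd hab.symm hy12
    · rfl
  · intro y hy
    simp only [Set.mem_insert_iff, Set.mem_singleton_iff] at hy
    rcases hy with rfl | rfl
    · exact ⟨_, Set.mem_insert _ _, hρ1⟩
    · exact ⟨_, Set.mem_insert_of_mem _ rfl, hρ2⟩
end

section
/- (Configuration e, the transpose of Configuration E.) Let ŵ ∈ S_N, regarded as a bijection {1,…,N} → {1,…,n₁}×{1,…,n₂}. Suppose there are k ∈ {1,…,N−2}, i ∈ {1,…,n₁}, j ∈ {1,…,n₂−2} such that ŵ(k) = (i,j), ŵ(k+1) = (i,j+1), ŵ(k+2) = (i,j+2). Then: (1) for v ∈ W determined by v⁻¹ = (1, (j j+1 j+2)) and v̂ ∈ S_N determined by v̂⁻¹ = ŵ·(k k+1 k+2)·ŵ₀, one has ŵ·Φ̂(((v̂ŵ)^∨)⁻¹) = {ε̂_{(i,j+1)} − ε̂_{(i,j)}, ε̂_{(i,j+2)} − ε̂_{(i,j)}} and Φ(v⁻¹) = {η_{j+1} − η_j, η_{j+2} − η_j}, and ρ restricts to a bijection between these two sets; and (2) for v ∈ W determined by v⁻¹ = (1, (j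 j+2 j+1)) and v̂ ∈ S_N determined by v̂⁻¹ = ŵ·(k k+2 k+1)·ŵ₀, one has ŵ·Φ̂(((v̂ŵ)^∨)⁻¹) = {ε̂_{(i,j+2)} − ε̂_{(i,j+1)}, ε̂_{(i,j+2)} − ε̂_{(i,j)}} and Φ(v⁻¹) = {η_{j+2} − η_{j+1}, η_{j+2} − η_j}, and ρ restricts to a bijection between these two sets. -/
open Equiv

/-!
Both sets are images of the inversion pairs `{(a, b) | a < b, σ b < σ a}` of a single permutation.
For `Φ̂` the permutation is `((v̂ŵ)^∨)⁻¹ = ŵ⁻¹ v̂⁻¹ ŵ₀⁻¹`, which collapses to the 3-cycle on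
`k, k+1, k+2`; for `Φ(v⁻¹)` it is the 3-cycle on `j, j+1, j+2`, placed in the `η`-factor. A 3-cycle
of consecutive positions has exactly two inversion pairs, and `ρ` sends `ε̂_{(i,a)} - ε̂_{(i,b)}` to
`η_a - η_b`, which matches the two images.
-/

def inversions {n : ℕ} (σ : Perm (Fin n)) : Set (Fin n × Fin n) :=
  {x | x.1 < x.2 ∧ σ x.2 < σ x.1}

lemma inv_mul_mul_eq_of_inv_eq {G : Type*} [Group G] {a b c d : G} (h : b⁻¹ = c * d * a) :
    (a * (b * c))⁻¹ = d := by
  rw [mul_inv_rev, mul_inv_rev, h]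
  group

lemma epsHat_sub_epsHat_inj {n : ℕ} {p q p' q' : Fin n} (hpq : p ≠ q)
    (h : epsHat p - epsHat q = epsHat p' - epsHat q') : p = p' ∧ q = q' := by
  have hp := congrFun h p
  have hq := congrFun h q
  simp only [epsHat, Pi.sub_apply, Pi.single_apply, if_neg hpq, if_neg (Ne.symm hpq)] at hp hq
  constructor <;> by_contra hne
  · rw [if_neg hne] at hp
    split_ifs at hp <;> omega
  · rw [if_neg hne] at hq
    split_ifs at hq <;> omega

lemma epsHat_sub_epsHat_ne_zero {n : ℕ} {p q : Fin n} (hpq : p ≠ q) :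
    epsHat p - epsHat q ≠ 0 := fun h =>
  hpq (epsHat_sub_epsHat_inj hpq (h.trans (sub_self (epsHat p)).symm)).2.symm

lemma hatAct_epsHat_sub {n : ℕ} (u : Perm (Fin n)) (p q : Fin n) :
    hatAct u (epsHat p - epsHat q) = epsHat (u p) - epsHat (u q) := by
  funext m
  simp [hatAct, epsHat, Pi.single_apply, Equiv.symm_apply_eq]

lemma PhiHat_eq_image_inversions {n : ℕ} (u : Perm (Fin n)) :
    PhiHat u = (fun x => epsHat (u x.1) - epsHat (u x.2)) '' inversions u := by
  ext x
  constructor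
  · rintro ⟨⟨y, ⟨p, q, hpq, rfl⟩, rfl⟩, z, ⟨a, b, hab, rfl⟩, hz⟩
    rw [hatAct_epsHat_sub, neg_sub] at hz
    obtain ⟨rfl, rfl⟩ := epsHat_sub_epsHat_inj (u.injective.ne hab.ne) hz
    exact ⟨(a, b), ⟨hab, hpq⟩, by rw [neg_sub]⟩
  · rintro ⟨⟨a, b⟩, ⟨hab, hu⟩, rfl⟩
    exact ⟨⟨epsHat (u b) - epsHat (u a), ⟨u b, u a, hu, rfl⟩, neg_sub _ _⟩,
      epsHat a - epsHat b, ⟨a, b, hab, rfl⟩, hatAct_epsHat_sub u a b⟩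

lemma image_hatAct_PhiHat {n : ℕ} (w u : Perm (Fin n)) :
    hatAct w '' PhiHat u = (fun x => epsHat (w (u x.1)) - epsHat (w (u x.2))) '' inversions u := by
  rw [PhiHat_eq_image_inversions, Set.image_image]
  simp only [hatAct_epsHat_sub]

section ProductRoots

variable {n₁ n₂ : ℕ}

lemma eps_sub_eps (a b : Fin n₁) :
    (eps a - eps b : L n₁ n₂) = (epsHat a - epsHat b, 0) := by
  simp [eps, epsHat]

lemma eta_sub_eta (c d : Fin n₂) :
    (eta c - eta d : L n₁ n₂) = (0, epsHat c - epsHat d) := by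
  simp [eta, epsHat]

lemma eta_sub_eta_inj {a b a' b' : Fin n₂} (hab : a ≠ b)
    (h : (eta a - eta b : L n₁ n₂) = eta a' - eta b') : a = a' ∧ b = b' :=
  epsHat_sub_epsHat_inj hab (by simpa [eta_sub_eta] using h)

lemma wAct_one_prod (d : Perm (Fin n₂)) (x : L n₁ n₂) :
    wAct (1, d) x = (x.1, hatAct d x.2) :=
  rfl

lemma Phi_one_prod (d : Perm (Fin n₂)) :
    Phi ((1, d) : Perm (Fin n₁) × Perm (Fin n₂)) =
      (fun x => eta (d x.1) - eta (d x.2)) '' inversions d := by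
  have hatAct_zero : hatAct d (0 : Lhat n₂) = 0 := rfl
  ext x
  constructor
  · rintro ⟨⟨y, hy, rfl⟩, z, hz, hzx⟩
    rcases hy with ⟨p, q, hpq, rfl⟩ | ⟨p, q, hpq, rfl⟩ <;>
      rcases hz with ⟨a, b, hab, rfl⟩ | ⟨a, b, hab, rfl⟩ <;>
      simp only [eps_sub_eps, eta_sub_eta, wAct_one_prod, hatAct_epsHat_sub, hatAct_zero,
        Prod.neg_mk, neg_sub, neg_zero, Prod.mk.injEq, and_true, true_and] at hzx
    · obtain ⟨rfl, rfl⟩ := epsHat_sub_epsHat_inj hab.ne hzx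
      exact absurd hpq (lt_asymm hab)
    · exact absurd hzx.1.symm (epsHat_sub_epsHat_ne_zero hpq.ne')
    · exact absurd hzx.1 (epsHat_sub_epsHat_ne_zero hab.ne)
    · obtain ⟨rfl, rfl⟩ := epsHat_sub_epsHat_inj (d.injective.ne hab.ne) hzx
      exact ⟨(a, b), ⟨hab, hpq⟩, (neg_sub _ _).symm⟩
  · rintro ⟨⟨a, b⟩, ⟨hab, hd⟩, rfl⟩
    exact ⟨⟨eta (d b) - eta (d a), Or.inr ⟨d b, d a, hd, rfl⟩, neg_sub _ _⟩,
      eta a - eta b, Or.inr ⟨a, b, hab, rfl⟩, by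
        simp only [eta_sub_eta, wAct_one_prod, hatAct_epsHat_sub]⟩

lemma bijOn_epsHat_lex_sub {ρ : Lhat (n₁ * n₂) →ₗ[ℤ] L n₁ n₂}
    (hρ : ∀ (i : Fin n₁) (j : Fin n₂), ρ (epsHat (lex i j)) = eps i + eta j) (i : Fin n₁)
    {a b a' b' : Fin n₂} (hab : a ≠ b) (hne : a ≠ a' ∨ b ≠ b') :
    Set.BijOn ρ {epsHat (lex i a) - epsHat (lex i b), epsHat (lex i a') - epsHat (lex i b')}
      {eta a - eta b, eta a' - eta b'} := by
  have hρ_sub (c d : Fin n₂) : ρ (epsHat (lex i c) - epsHat (lex i d)) = eta c - eta d := by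
    rw [map_sub, hρ, hρ]
    abel
  rw [← hρ_sub a b, ← hρ_sub a' b', ← Set.image_pair]
  refine Set.InjOn.bijOn_image (Set.injOn_pair.2 fun h => ?_)
  rw [hρ_sub, hρ_sub] at h
  obtain ⟨rfl, rfl⟩ := eta_sub_eta_inj hab h
  simp at hne

end ProductRoots

section Cycles

variable {α : Type*} [DecidableEq α] {a b c : α}

lemma cyc_apply_left (hab : a ≠ b) (hac : a ≠ c) : cyc a b c a = b := by
  simp [cyc, swap_apply_of_ne_of_ne hab hac]

lemma cyc_apply_middle (hca : c ≠ a) (hcb : c ≠ b) : cyc a b c b = c := by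
  simp [cyc, swap_apply_of_ne_of_ne hca hcb]

lemma cyc_apply_right : cyc a b c c = a := by
  simp [cyc]

variable {n : ℕ} {k k₁ k₂ : Fin n} (hk₁ : (k₁ : ℕ) = k + 1) (hk₂ : (k₂ : ℕ) = k + 2)
include hk₁ hk₂

lemma inversions_cyc : inversions (cyc k k₁ k₂) = {(k, k₂), (k₁, k₂)} := by
  ext ⟨a, b⟩
  simp only [inversions, cyc, Perm.mul_apply, swap_apply_def, Set.mem_ofPred_eq,
    Set.mem_insert_iff, Set.mem_singleton_iff, Prod.mk.injEq, Fin.lt_def, Fin.ext_iff]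
  split_ifs <;> omega

lemma inversions_cyc_rev : inversions (cyc k k₂ k₁) = {(k, k₂), (k, k₁)} := by
  ext ⟨a, b⟩
  simp only [inversions, cyc, Perm.mul_apply, swap_apply_def, Set.mem_ofPred_eq,
    Set.mem_insert_iff, Set.mem_singleton_iff, Prod.mk.injEq, Fin.lt_def, Fin.ext_iff]
  split_ifs <;> omega

lemma image_inversions_cyc {M : Type*} [Sub M] (e : Fin n → M) :
    (fun x => e (cyc k k₁ k₂ x.1) - e (cyc k k₁ k₂ x.2)) '' inversions (cyc k k₁ k₂) =
      {e k₁ - e k, e k₂ - e k} := by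
  have hkk₁ : k ≠ k₁ := Fin.ne_of_val_ne (by omega)
  have hkk₂ : k ≠ k₂ := Fin.ne_of_val_ne (by omega)
  have hk₂k₁ : k₂ ≠ k₁ := Fin.ne_of_val_ne (by omega)
  rw [inversions_cyc hk₁ hk₂, Set.image_pair, cyc_apply_left hkk₁ hkk₂, cyc_apply_right,
    cyc_apply_middle hkk₂.symm hk₂k₁]

lemma image_inversions_cyc_rev {M : Type*} [Sub M] (e : Fin n → M) :
    (fun x => e (cyc k k₂ k₁ x.1) - e (cyc k k₂ k₁ x.2)) '' inversions (cyc k k₂ k₁) =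
      {e k₂ - e k₁, e k₂ - e k} := by
  have hkk₁ : k ≠ k₁ := Fin.ne_of_val_ne (by omega)
  have hkk₂ : k ≠ k₂ := Fin.ne_of_val_ne (by omega)
  have hk₁k₂ : k₁ ≠ k₂ := Fin.ne_of_val_ne (by omega)
  rw [inversions_cyc_rev hk₁ hk₂, Set.image_pair, cyc_apply_left hkk₂ hkk₁, cyc_apply_right,
    cyc_apply_middle hkk₁.symm hk₁k₂]

end Cycles

theorem config_e_transposed_general (n₁ n₂ : ℕ)
    (ρ : Lhat (n₁ * n₂) →ₗ[ℤ] L n₁ n₂)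
    (hρ : ∀ (i : Fin n₁) (j : Fin n₂), ρ (epsHat (lex i j)) = eps i + eta j)
    (wh : Perm (Fin (n₁ * n₂)))
    (k k₁ k₂ : Fin (n₁ * n₂)) (hk₁ : (k₁ : ℕ) = (k : ℕ) + 1) (hk₂ : (k₂ : ℕ) = (k : ℕ) + 2)
    (i : Fin n₁)
    (j j' j'' : Fin n₂) (hj' : (j' : ℕ) = (j : ℕ) + 1) (hj'' : (j'' : ℕ) = (j : ℕ) + 2)
    (hwk : wh k = lex i j) (hwk₁ : wh k₁ = lex i j') (hwk₂ : wh k₂ = lex i j'') :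
    (∀ (v : Perm (Fin n₁) × Perm (Fin n₂)) (vh : Perm (Fin (n₁ * n₂))),
      v⁻¹ = (1, cyc j j' j'') → vh⁻¹ = wh * cyc k k₁ k₂ * w0 (n₁ * n₂) →
        hatAct wh '' PhiHat ((w0 (n₁ * n₂) * (vh * wh))⁻¹) =
          {epsHat (lex i j') - epsHat (lex i j), epsHat (lex i j'') - epsHat (lex i j)} ∧
        Phi v⁻¹ = {(eta j' - eta j : L n₁ n₂), eta j'' - eta j} ∧
        Set.BijOn (⇑ρ) (hatAct wh '' PhiHat ((w0 (n₁ * n₂) * (vh * wh))⁻¹)) (Phi v⁻¹)) ∧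
    (∀ (v : Perm (Fin n₁) × Perm (Fin n₂)) (vh : Perm (Fin (n₁ * n₂))),
      v⁻¹ = (1, cyc j j'' j') → vh⁻¹ = wh * cyc k k₂ k₁ * w0 (n₁ * n₂) →
        hatAct wh '' PhiHat ((w0 (n₁ * n₂) * (vh * wh))⁻¹) =
          {epsHat (lex i j'') - epsHat (lex i j'), epsHat (lex i j'') - epsHat (lex i j)} ∧
        Phi v⁻¹ = {(eta j'' - eta j' : L n₁ n₂), eta j'' - eta j} ∧
        Set.BijOn (⇑ρ) (hatAct wh '' PhiHat ((w0 (n₁ * n₂) * (vh * wh))⁻¹)) (Phi v⁻¹)) := by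
  have hjj' : j ≠ j' := Fin.ne_of_val_ne (by omega)
  have hj'j'' : j' ≠ j'' := Fin.ne_of_val_ne (by omega)
  refine ⟨fun v vh hv hvh => ?_, fun v vh hv hvh => ?_⟩
  · have hPhiHat : hatAct wh '' PhiHat ((w0 (n₁ * n₂) * (vh * wh))⁻¹) =
        {epsHat (lex i j') - epsHat (lex i j), epsHat (lex i j'') - epsHat (lex i j)} := by
      rw [inv_mul_mul_eq_of_inv_eq hvh, image_hatAct_PhiHat,
        image_inversions_cyc hk₁ hk₂ (fun p => epsHat (wh p)), hwk, hwk₁, hwk₂]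
    have hPhi : Phi v⁻¹ = {(eta j' - eta j : L n₁ n₂), eta j'' - eta j} := by
      rw [hv, Phi_one_prod, image_inversions_cyc hj' hj'' eta]
    rw [hPhiHat, hPhi]
    exact ⟨rfl, rfl, bijOn_epsHat_lex_sub hρ i hjj'.symm (.inl hj'j'')⟩
  · have hPhiHat : hatAct wh '' PhiHat ((w0 (n₁ * n₂) * (vh * wh))⁻¹) =
        {epsHat (lex i j'') - epsHat (lex i j'), epsHat (lex i j'') - epsHat (lex i j)} := by
      rw [inv_mul_mul_eq_of_inv_eq hvh, image_hatAct_PhiHat,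
        image_inversions_cyc_rev hk₁ hk₂ (fun p => epsHat (wh p)), hwk, hwk₁, hwk₂]
    have hPhi : Phi v⁻¹ = {(eta j'' - eta j' : L n₁ n₂), eta j'' - eta j} := by
      rw [hv, Phi_one_prod, image_inversions_cyc_rev hj' hj'' eta]
    rw [hPhiHat, hPhi]
    exact ⟨rfl, rfl, bijOn_epsHat_lex_sub hρ i hj'j''.symm (.inr hjj'.symm)⟩

/-- Configuration e, the transpose of Configuration E: `ŵ(k) = (i,j)`,
`ŵ(k+1) = (i,j+1)`, `ŵ(k+2) = (i,j+2)`. Part (1) concerns `v⁻¹ = (1, (j j+1 j+2))`,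
`v̂⁻¹ = ŵ (k k+1 k+2) ŵ₀`; part (2) concerns `v⁻¹ = (1, (j j+2 j+1))`,
`v̂⁻¹ = ŵ (k k+2 k+1) ŵ₀`. In each case the two sets are as indicated and `ρ` restricts
to a bijection between them. -/
theorem config_e_transposed (n₁ n₂ : ℕ) (hn₁ : 0 < n₁) (hn₂ : 0 < n₂)
    (ρ : Lhat (n₁ * n₂) →ₗ[ℤ] L n₁ n₂)
    (hρ : ∀ (i : Fin n₁) (j : Fin n₂), ρ (epsHat (lex i j)) = eps i + eta j)
    (wh : Perm (Fin (n₁ * n₂)))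
    (k k₁ k₂ : Fin (n₁ * n₂)) (hk₁ : (k₁ : ℕ) = (k : ℕ) + 1) (hk₂ : (k₂ : ℕ) = (k : ℕ) + 2)
    (i : Fin n₁)
    (j j' j'' : Fin n₂) (hj' : (j' : ℕ) = (j : ℕ) + 1) (hj'' : (j'' : ℕ) = (j : ℕ) + 2)
    (hwk : wh k = lex i j) (hwk₁ : wh k₁ = lex i j') (hwk₂ : wh k₂ = lex i j'') :
    (∀ (v : Perm (Fin n₁) × Perm (Fin n₂)) (vh : Perm (Fin (n₁ * n₂))),
      v⁻¹ = (1, cyc j j' j'') → vh⁻¹ = wh * cyc k k₁ k₂ * w0 (n₁ * n₂) →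
        hatAct wh '' PhiHat ((w0 (n₁ * n₂) * (vh * wh))⁻¹) =
          {epsHat (lex i j') - epsHat (lex i j), epsHat (lex i j'') - epsHat (lex i j)} ∧
        Phi v⁻¹ = {(eta j' - eta j : L n₁ n₂), eta j'' - eta j} ∧
        Set.BijOn (⇑ρ) (hatAct wh '' PhiHat ((w0 (n₁ * n₂) * (vh * wh))⁻¹)) (Phi v⁻¹)) ∧
    (∀ (v : Perm (Fin n₁) × Perm (Fin n₂)) (vh : Perm (Fin (n₁ * n₂))),
      v⁻¹ = (1, cyc j j'' j') → vh⁻¹ = wh * cyc k k₂ k₁ * w0 (n₁ * n₂) →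
        hatAct wh '' PhiHat ((w0 (n₁ * n₂) * (vh * wh))⁻¹) =
          {epsHat (lex i j'') - epsHat (lex i j'), epsHat (lex i j'') - epsHat (lex i j)} ∧
        Phi v⁻¹ = {(eta j'' - eta j' : L n₁ n₂), eta j'' - eta j} ∧
        Set.BijOn (⇑ρ) (hatAct wh '' PhiHat ((w0 (n₁ * n₂) * (vh * wh))⁻¹)) (Phi v⁻¹)) :=
  config_e_transposed_general n₁ n₂ ρ hρ wh k k₁ k₂ hk₁ hk₂ i j j' j'' hj' hj'' hwk hwk₁ hwk₂
end
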